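/- Let φ : D² → D² be continuous on the closed unit disc, holomorphic on the interior, mapping ∂D² to ∂D², with winding number 1 of φ|_{∂D²} around the origin, and with φ(0) = 0. Then φ is a rotation: φ(z) = z₀ · z for some z₀ ∈ ℂ with |z₀| = 1. -/

import Mathlib

open Metric Complex ComplexConjugate Set Filter
open scoped Real

/-!
Writing `φ z = z * g z`, the function `g` has boundary lift `θ ↦ a θ - θ`: it has modulus one on
the circle and winding number zero, and it suffices to show that such a `g` is constant. Without
zeros, the maximum principle for `g` and `g⁻¹` gives `‖g‖ = 1` on the disc, so `g` is constant.
A zero `w` can be divided out by the Blaschke factor `(z - w) / (1 - conj w * z)`, which lowers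
the winding number by one. All zeros lie in a disc of radius `ρ < 1`, on which the Blaschke
factors are uniformly bounded by some `C < 1` at the point `ρ`; since `‖g ρ‖ ≤ 1`, after finitely
many divisions the quotient is zero-free, hence constant, which contradicts its negative winding
number.
-/

theorem one_sub_conj_mul_ne_zero {w z : ℂ} (hw : ‖w‖ < 1) (hz : ‖z‖ ≤ 1) :
    1 - conj w * z ≠ 0 := by
  refine sub_ne_zero.mpr fun h ↦ ?_
  have : ‖conj w * z‖ < 1 := by
    rw [norm_mul, norm_conj]
    nlinarith [norm_nonneg w, norm_nonneg z]
  simp [← h] at this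

theorem norm_sub_sq_add_mul_eq_norm_one_sub_conj_mul_sq (w z : ℂ) :
    ‖z - w‖ ^ 2 + (1 - ‖w‖ ^ 2) * (1 - ‖z‖ ^ 2) = ‖1 - conj w * z‖ ^ 2 := by
  simp only [Complex.sq_norm, normSq_apply, sub_re, sub_im, mul_re, mul_im, one_re, one_im,
    conj_re, conj_im]
  ring

theorem exists_norm_sub_le_mul_norm_one_sub_conj_mul {r : ℝ} (hr0 : 0 ≤ r) (hr1 : r < 1) :
    ∃ C, 0 < C ∧ C < 1 ∧
      ∀ w z : ℂ, ‖w‖ ≤ r → ‖z‖ ≤ r → ‖z - w‖ ≤ C * ‖1 - conj w * z‖ := by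
  set t := 1 - r ^ 2
  have ht0 : 0 < t := by nlinarith
  have hD : 0 < 1 - t ^ 2 / 4 := by nlinarith
  refine ⟨√(1 - t ^ 2 / 4), Real.sqrt_pos.mpr hD, (Real.sqrt_lt' one_pos).mpr (by nlinarith),
    fun w z hw hz ↦ ?_⟩
  have hwz : (1 - ‖w‖ ^ 2) * (1 - ‖z‖ ^ 2) ≥ t * t := by
    gcongr <;> nlinarith [norm_nonneg w, norm_nonneg z]
  have hM : ‖1 - conj w * z‖ ^ 2 ≤ 4 := by
    have : ‖1 - conj w * z‖ ≤ 1 + ‖w‖ * ‖z‖ := by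
      simpa [norm_conj] using norm_sub_le (1 : ℂ) (conj w * z)
    have hwz1 : ‖w‖ * ‖z‖ ≤ 1 := by nlinarith [norm_nonneg w, norm_nonneg z]
    nlinarith [norm_nonneg (1 - conj w * z)]
  calc ‖z - w‖ = √(‖z - w‖ ^ 2) := (Real.sqrt_sq (norm_nonneg _)).symm
    _ ≤ √((1 - t ^ 2 / 4) * ‖1 - conj w * z‖ ^ 2) := by
      gcongr
      nlinarith [norm_sub_sq_add_mul_eq_norm_one_sub_conj_mul_sq w z,
        mul_le_mul_of_nonneg_left hM (sq_nonneg t)]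
    _ = √(1 - t ^ 2 / 4) * ‖1 - conj w * z‖ := by
      rw [Real.sqrt_mul hD.le, Real.sqrt_sq (norm_nonneg _)]

theorem conj_eq_exp_mul_self (q : ℂ) : conj q = exp (↑(-2 * arg q) * I) * q := by
  conv_lhs => rw [← norm_mul_exp_arg_mul_I q]
  conv_rhs => arg 2; rw [← norm_mul_exp_arg_mul_I q]
  rw [map_mul, conj_ofReal, ← exp_conj, map_mul, conj_ofReal, conj_I, mul_left_comm, ← exp_add]
  congr 2
  push_cast
  ring

theorem exists_lift_blaschke {w : ℂ} (hw : ‖w‖ < 1) :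
    ∃ β : ℝ → ℝ, Continuous β ∧ β (2 * π) = β 0 + 2 * π ∧
      ∀ θ : ℝ, exp (θ * I) - w = exp (β θ * I) * (1 - conj w * exp (θ * I)) := by
  set q : ℝ → ℂ := fun θ ↦ 1 - conj w * exp (θ * I)
  have hq : ∀ θ, q θ ∈ slitPlane := fun θ ↦ by
    simpa [q, sub_eq_add_neg] using
      mem_slitPlane_of_norm_lt_one (z := -(conj w * exp (θ * I))) (by simpa [norm_conj] using hw)
  have hq_cont : Continuous fun θ ↦ arg (q θ) :=
    continuous_iff_continuousAt.mpr fun θ ↦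
      (continuousAt_arg (hq θ)).comp (by fun_prop : Continuous q).continuousAt
  have hq_periodic : q (2 * π) = q 0 := by simp [q, exp_two_pi_mul_I]
  refine ⟨fun θ ↦ θ - 2 * arg (q θ), by fun_prop, by simp only [hq_periodic]; ring, fun θ ↦ ?_⟩
  -- on the circle `z - w = z * conj (1 - conj w * z)`, and `1 - conj w * z` has positive real part
  have hz : exp (θ * I) * conj (exp (θ * I)) = 1 := by
    rw [mul_conj, normSq_eq_norm_sq, norm_exp_ofReal_mul_I]; norm_num
  calc exp (θ * I) - w = exp (θ * I) * conj (q θ) := by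
        simp only [q, map_sub, map_one, map_mul, conj_conj]
        linear_combination w * hz
    _ = _ := by
      rw [conj_eq_exp_mul_self, ← mul_assoc, ← exp_add]
      congr 2
      push_cast
      ring

theorem DiffContOnCl.dslope {E : Type*} [NormedAddCommGroup E] [NormedSpace ℂ E] [CompleteSpace E]
    {f : ℂ → E} {s : Set ℂ} {a : ℂ} (hf : DiffContOnCl ℂ f s) (hs : IsOpen s) (ha : a ∈ s) :
    DiffContOnCl ℂ (dslope f a) s :=
  ⟨(differentiableOn_dslope (hs.mem_nhds ha)).mpr hf.1,
    (continuousOn_dslope (mem_of_superset (hs.mem_nhds ha) subset_closure)).mpr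
      ⟨hf.2, hf.differentiableAt hs ha⟩⟩

theorem eqOn_const_of_norm_eq_one_of_ne_zero {h : ℂ → ℂ} {U : Set ℂ} {c : ℂ}
    (hU : Bornology.IsBounded U) (hUo : IsOpen U) (hUc : IsPreconnected U) (hcU : c ∈ U)
    (hh : DiffContOnCl ℂ h U) (hfr : ∀ z ∈ frontier U, ‖h z‖ = 1) (hne : ∀ z ∈ U, h z ≠ 0) :
    EqOn h (Function.const ℂ (h c)) (closure U) := by
  have hne' : ∀ z ∈ closure U, h z ≠ 0 := by
    rw [closure_eq_self_union_frontier]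
    rintro z (hz | hz)
    · exact hne z hz
    · exact norm_ne_zero_iff.mp (by simp [hfr z hz])
  have hle : ∀ z ∈ closure U, ‖h z‖ ≤ 1 :=
    fun z hz ↦ norm_le_of_forall_mem_frontier_norm_le hU hh (fun w hw ↦ (hfr w hw).le) hz
  have hc : 1 ≤ ‖h c‖ := by
    have := norm_le_of_forall_mem_frontier_norm_le hU (hh.inv hne') (C := 1)
      (fun w hw ↦ by simp [hfr w hw]) (subset_closure hcU)
    rwa [Pi.inv_apply, norm_inv, inv_le_one₀ (norm_pos_iff.mpr (hne c hcU))] at this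
  exact eqOn_closure_of_isPreconnected_of_isMaxOn_norm hUc hUo hh hcU
    fun z hz ↦ (hle z (subset_closure hz)).trans hc

theorem eq_of_continuous_of_exp_mul_I_eq {c : ℝ → ℝ} (hc : Continuous c)
    (he : ∀ s t, exp (c s * I) = exp (c t * I)) (s t : ℝ) : c s = c t :=
  Circle.isCoveringMap_exp.const_of_comp hc (fun s t ↦ Circle.ext (by simpa using he s t)) s t

theorem norm_eq_one_of_lift {h : ℂ → ℂ} {c : ℝ → ℝ}
    (hlift : ∀ θ : ℝ, h (exp (θ * I)) = exp (c θ * I)) {z : ℂ} (hz : z ∈ sphere (0 : ℂ) 1) :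
    ‖h z‖ = 1 := by
  obtain ⟨θ, rfl⟩ := (norm_eq_one_iff z).mp (by simpa using hz)
  rw [hlift, norm_exp_ofReal_mul_I]

theorem eqOn_const_of_lift_of_ne_zero {h : ℂ → ℂ} {c : ℝ → ℝ}
    (hh : DiffContOnCl ℂ h (ball 0 1)) (hlift : ∀ θ : ℝ, h (exp (θ * I)) = exp (c θ * I))
    (hne : ∀ z ∈ ball (0 : ℂ) 1, h z ≠ 0) :
    EqOn h (Function.const ℂ (h 0)) (closedBall 0 1) := by
  rw [← closure_ball 0 one_ne_zero]
  refine eqOn_const_of_norm_eq_one_of_ne_zero isBounded_ball isOpen_ball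
    (convex_ball 0 1).isPreconnected (mem_ball_self one_pos) hh (fun z hz ↦ ?_) hne
  rw [frontier_ball 0 one_ne_zero] at hz
  exact norm_eq_one_of_lift hlift hz

theorem exists_factor_blaschke {h : ℂ → ℂ} {c : ℝ → ℝ} {w : ℂ}
    (hh : DiffContOnCl ℂ h (ball 0 1)) (hc : Continuous c)
    (hlift : ∀ θ : ℝ, h (exp (θ * I)) = exp (c θ * I)) (hw : w ∈ ball (0 : ℂ) 1) (hw0 : h w = 0) :
    ∃ (h₁ : ℂ → ℂ) (c₁ : ℝ → ℝ), DiffContOnCl ℂ h₁ (ball 0 1) ∧ Continuous c₁ ∧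
      (∀ θ : ℝ, h₁ (exp (θ * I)) = exp (c₁ θ * I)) ∧
      c₁ (2 * π) - c₁ 0 = c (2 * π) - c 0 - 2 * π ∧
      ∀ z, h z * (1 - conj w * z) = (z - w) * h₁ z := by
  rw [mem_ball_zero_iff] at hw
  obtain ⟨β, hβ, hβ_wind, hβ_lift⟩ := exists_lift_blaschke hw
  have hfactor : ∀ z, h z * (1 - conj w * z) = (z - w) * (dslope h w z * (1 - conj w * z)) :=
    fun z ↦ by rw [← mul_assoc, ← smul_eq_mul (z - w), sub_smul_dslope, hw0, sub_zero]
  refine ⟨fun z ↦ dslope h w z * (1 - conj w * z), c - β,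
    (hh.dslope isOpen_ball (mem_ball_zero_iff.mpr hw)).smul
      (Differentiable.diffContOnCl (by fun_prop)), hc.sub hβ,
    fun θ ↦ ?_, by simp only [Pi.sub_apply, hβ_wind]; ring, hfactor⟩
  have hne := one_sub_conj_mul_ne_zero hw (norm_exp_ofReal_mul_I θ).le
  have := hfactor (exp (θ * I))
  rw [hlift, hβ_lift] at this
  rw [Pi.sub_apply, ofReal_sub, sub_mul, exp_sub, eq_div_iff (exp_ne_zero _)]
  show dslope h w _ * _ * _ = _
  apply mul_right_cancel₀ hne
  rw [this]
  ring

theorem ne_zero_of_lift_of_winding_nonpos {S : Set ℂ} {z₀ : ℂ} {C : ℝ}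
    (hz₀ : z₀ ∈ ball (0 : ℂ) 1) (hC : 0 < C) (hS : ∀ w ∈ S, ‖z₀ - w‖ ≤ C * ‖1 - conj w * z₀‖)
    (k : ℕ) {h : ℂ → ℂ} {c : ℝ → ℝ} (hh : DiffContOnCl ℂ h (ball 0 1)) (hc : Continuous c)
    (hlift : ∀ θ : ℝ, h (exp (θ * I)) = exp (c θ * I)) (hwind : c (2 * π) ≤ c 0)
    (hzeros : ∀ w ∈ ball (0 : ℂ) 1, h w = 0 → w ∈ S) (hk : C ^ k < ‖h z₀‖) :
    ∀ w ∈ ball (0 : ℂ) 1, h w ≠ 0 := by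
  induction k generalizing h c with
  | zero =>
    refine absurd hk (not_lt.mpr ?_)
    rw [pow_zero]
    refine norm_le_of_forall_mem_frontier_norm_le isBounded_ball hh (fun z hz ↦ ?_)
      (subset_closure hz₀)
    rw [frontier_ball 0 one_ne_zero] at hz
    exact (norm_eq_one_of_lift hlift hz).le
  | succ k ih =>
    intro w hw hw0
    obtain ⟨h₁, c₁, hh₁, hc₁, hlift₁, hwind₁, hfactor⟩ :=
      exists_factor_blaschke hh hc hlift hw hw0
    have hw1 := mem_ball_zero_iff.mp hw
    have hzeros₁ : ∀ v ∈ ball (0 : ℂ) 1, h₁ v = 0 → v ∈ S := fun v hv hv0 ↦ by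
      have := hfactor v
      rw [hv0, mul_zero, mul_eq_zero] at this
      exact hzeros v hv (this.resolve_right
        (one_sub_conj_mul_ne_zero hw1 (mem_ball_zero_iff.mp hv).le))
    have hk₁ : C ^ k < ‖h₁ z₀‖ := by
      have hq := norm_pos_iff.mpr (one_sub_conj_mul_ne_zero hw1 (mem_ball_zero_iff.mp hz₀).le)
      have hstep : ‖h z₀‖ ≤ C * ‖h₁ z₀‖ := by
        refine le_of_mul_le_mul_right ?_ hq
        rw [← norm_mul, hfactor, norm_mul, mul_right_comm]
        exact mul_le_mul_of_nonneg_right (hS w (hzeros w hw hw0)) (norm_nonneg _)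
      exact lt_of_mul_lt_mul_left ((pow_succ' C k ▸ hk).trans_le hstep) hC.le
    have hne₁ := ih hh₁ hc₁ hlift₁ (by linarith [Real.pi_pos]) hzeros₁ hk₁
    have hconst₁ := eqOn_const_of_lift_of_ne_zero hh₁ hlift₁ hne₁
    have hsphere : ∀ θ : ℝ, exp (θ * I) ∈ closedBall (0 : ℂ) 1 := fun θ ↦ by
      simp [norm_exp_ofReal_mul_I]
    have hperiodic₁ := eq_of_continuous_of_exp_mul_I_eq hc₁
      (fun s t ↦ by rw [← hlift₁, ← hlift₁, hconst₁ (hsphere s), hconst₁ (hsphere t)]; rfl)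
      (2 * π) 0
    linarith [Real.pi_pos]

theorem eqOn_const_of_lift_of_winding_nonpos {h : ℂ → ℂ} {c : ℝ → ℝ}
    (hh : DiffContOnCl ℂ h (ball 0 1)) (hc : Continuous c)
    (hlift : ∀ θ : ℝ, h (exp (θ * I)) = exp (c θ * I)) (hwind : c (2 * π) ≤ c 0) :
    EqOn h (Function.const ℂ (h 0)) (closedBall 0 1) := by
  set Z := closedBall (0 : ℂ) 1 ∩ h ⁻¹' {0}
  have hZ_closed : IsClosed Z :=
    hh.continuousOn_ball.preimage_isClosed_of_isClosed isClosed_closedBall isClosed_singleton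
  have hZ_ball : Z ⊆ ball 0 1 := fun z ⟨hz, hz0⟩ ↦ by
    refine mem_ball_zero_iff.mpr ((mem_closedBall_zero_iff.mp hz).lt_of_ne fun h1 ↦ ?_)
    have := norm_eq_one_of_lift hlift (mem_sphere_zero_iff_norm.mpr h1)
    simp_all
  obtain ⟨r, hr1, hZr⟩ := exists_lt_subset_ball hZ_closed hZ_ball
  set ρ := max r 0
  have hρ : ‖(ρ : ℂ)‖ = ρ := by simp [ρ]
  have hρ1 : ρ < 1 := max_lt hr1 one_pos
  obtain ⟨C, hC0, hC1, hC⟩ := exists_norm_sub_le_mul_norm_one_sub_conj_mul (le_max_right r 0) hρ1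
  have hzeros : ∀ w ∈ ball (0 : ℂ) 1, h w = 0 → w ∈ closedBall (0 : ℂ) ρ := fun w hw hw0 ↦
    ball_subset_closedBall <|
      ball_subset_ball (le_max_left r 0) (hZr ⟨ball_subset_closedBall hw, hw0⟩)
  have hρ0 : h ρ ≠ 0 := fun h0 ↦ by
    have := mem_ball_zero_iff.mp (hZr ⟨mem_closedBall_zero_iff.mpr (hρ.trans_le hρ1.le), h0⟩)
    rw [hρ] at this
    exact (le_max_left r 0).not_gt this
  obtain ⟨k, hk⟩ := exists_pow_lt_of_lt_one (norm_pos_iff.mpr hρ0) hC1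
  exact eqOn_const_of_lift_of_ne_zero hh hlift
    (ne_zero_of_lift_of_winding_nonpos (mem_ball_zero_iff.mpr (hρ.trans_lt hρ1)) hC0
      (fun w hw ↦ hC w ρ (mem_closedBall_zero_iff.mp hw) hρ.le) k hh hc hlift hwind hzeros hk)

theorem rotation_of_winding_one_general (φ : ℂ → ℂ)
    (hcont : ContinuousOn φ (closedBall (0 : ℂ) 1))
    (hdiff : DifferentiableOn ℂ φ (ball (0 : ℂ) 1))
    (hzero : φ 0 = 0)
    (a : ℝ → ℝ) (ha : Continuous a)
    (hlift : ∀ θ : ℝ, φ (Complex.exp (θ * Complex.I)) = Complex.exp (a θ * Complex.I))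
    (hwind : a (2 * Real.pi) = a 0 + 2 * Real.pi) :
    ∃ z₀ : ℂ, ‖z₀‖ = 1 ∧ ∀ z ∈ closedBall (0 : ℂ) 1, φ z = z₀ * z := by
  have hφ : DiffContOnCl ℂ φ (ball 0 1) := ⟨hdiff, by rwa [closure_ball 0 one_ne_zero]⟩
  set g := dslope φ 0
  have hfactor : ∀ z, φ z = z * g z := fun z ↦ by
    simpa [hzero, eq_comm] using sub_smul_dslope φ 0 z
  have hg_lift : ∀ θ : ℝ, g (exp (θ * I)) = exp (↑(a θ - θ) * I) := fun θ ↦ by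
    rw [ofReal_sub, sub_mul, exp_sub, eq_div_iff (exp_ne_zero _), mul_comm, ← hfactor, hlift]
  have hg_const : EqOn g (Function.const ℂ (g 0)) (closedBall 0 1) :=
    eqOn_const_of_lift_of_winding_nonpos (hφ.dslope isOpen_ball (mem_ball_self one_pos))
      (by fun_prop) hg_lift (by linarith)
  refine ⟨g 0, ?_, fun z hz ↦ by rw [hfactor, hg_const hz, Function.const_apply, mul_comm]⟩
  rw [← norm_eq_one_of_lift hg_lift (z := 1) (by simp),
    hg_const (by simp : (1 : ℂ) ∈ closedBall 0 1), Function.const_apply]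

/-- A map `φ` of the closed unit disc to itself, continuous on the closed
disc and holomorphic on the interior, mapping the boundary circle to the boundary
circle with winding number `1` (expressed via a continuous angular lift `a` with
`φ(e^{iθ}) = e^{i a(θ)}` and `a(2π) = a(0) + 2π`), and fixing the origin, is a rotation:
`φ(z) = z₀ · z` for some `z₀` of modulus `1`. -/
theorem rotation_of_winding_one (φ : ℂ → ℂ)
    (hcont : ContinuousOn φ (closedBall (0 : ℂ) 1))
    (hdiff : DifferentiableOn ℂ φ (ball (0 : ℂ) 1))
    (hmaps : Set.MapsTo φ (closedBall (0 : ℂ) 1) (closedBall (0 : ℂ) 1))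
    (hbd : ∀ z ∈ sphere (0 : ℂ) 1, φ z ∈ sphere (0 : ℂ) 1)
    (hzero : φ 0 = 0)
    (a : ℝ → ℝ) (ha : Continuous a)
    (hlift : ∀ θ : ℝ, φ (Complex.exp (θ * Complex.I)) = Complex.exp (a θ * Complex.I))
    (hwind : a (2 * Real.pi) = a 0 + 2 * Real.pi) :
    ∃ z₀ : ℂ, ‖z₀‖ = 1 ∧ ∀ z ∈ closedBall (0 : ℂ) 1, φ z = z₀ * z :=
  rotation_of_winding_one_general φ hcont hdiff hzero a ha hlift hwind
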